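/- Suppose $\alpha(u):=\#\{j: 1/p_j\le u\}$ is regularly varying at $\infty$ of order $\gamma\in(0,1)$. Then $\frac{1}{\alpha(n)}\sum_{j=1}^\infty \mathrm{Var}(1_{M_{n,j}\ge 1})=\frac{1}{\alpha(n)}\sum_{j=1}^\infty e^{-np_j}(1-e^{-np_j})\to(2^\gamma-1)\Gamma(1-\gamma)$ as $n\to\infty$. -/

import Mathlib

/-!
With `F(t) = ∑_j (1 - e^{-t p_j})`, the identity `e^{-x}(1 - e^{-x}) = (1 - e^{-2x}) - (1 - e^{-x})`
turns the sum of variances into `F(2n) - F(n)`. Since `α(t/s) = #{j : s ≤ t p_j}`, Tonelli gives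
`F(t) = ∫_0^∞ e^{-s} α(t/s) ds`. A Potter bound `α(n/s) ≤ (2^{γ'} s^{-γ'} + 1) α(n)` with
`γ < γ' < 1` dominates `e^{-s} α(n/s)/α(n)`, which tends to `e^{-s} s^{-γ}` by regular variation,
so `F(n)/α(n) → Γ(1-γ)`. Together with `α(2n)/α(n) → 2^γ` this yields the limit
`2^γ Γ(1-γ) - Γ(1-γ)`.
-/

open Filter Topology Real Set

noncomputable section

/-- `α(u) = #{j : 1/p_j ≤ u}`, as a real number. -/
def alpha0 (p : ℕ → ℝ) (u : ℝ) : ℝ := (Nat.card {j : ℕ | 1 / p j ≤ u} : ℝ)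

/-- A function `α` is regularly varying at `∞` of order `γ` if `α(nu)/α(n) → u^γ` for all `u>0`. -/
def RegularlyVarying (α : ℝ → ℝ) (γ : ℝ) : Prop :=
  ∀ u : ℝ, 0 < u → Tendsto (fun n : ℕ => α ((n : ℝ) * u) / α (n : ℝ)) atTop (𝓝 (u ^ γ))

/-- `g_σ(m) = ∑_{l=1}^{m-1} 1/(l-σ)` (with `g_σ(0) = g_σ(1) = 0`). -/
def gfun (σ : ℝ) (m : ℕ) : ℝ := ∑ l ∈ Finset.Icc 1 (m - 1), (1 : ℝ) / ((l : ℝ) - σ)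

/-- Expectation of `g(M)` for `M ∼ Poisson(lam)`. -/
def Epois (lam : ℝ) (g : ℕ → ℝ) : ℝ :=
  ∑' m : ℕ, g m * (Real.exp (-lam) * lam ^ m / (Nat.factorial m : ℝ))

open MeasureTheory

section RegularVariation

variable {α : ℝ → ℝ} {γ : ℝ}

lemma RegularlyVarying.eventually_mul_two_le (hRV : RegularlyVarying α γ)
    (hpos : ∀ᶠ n : ℕ in atTop, 0 < α n) {γ' : ℝ} (hγ' : γ < γ') :
    ∀ᶠ n : ℕ in atTop, α (n * 2) ≤ 2 ^ γ' * α n := by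
  filter_upwards [(hRV 2 two_pos).eventually
    (eventually_le_nhds ((rpow_lt_rpow_left_iff one_lt_two).mpr hγ')), hpos] with n h hn
  exact (div_le_iff₀ hn).mp h

lemma le_pow_mul_of_forall_le_mul_two {f : ℕ → ℝ} {c : ℝ} (hc : 0 ≤ c) {N : ℕ}
    (h : ∀ n ≥ N, f (2 * n) ≤ c * f n) (k : ℕ) {n : ℕ} (hn : N ≤ n) :
    f (2 ^ k * n) ≤ c ^ k * f n := by
  induction k with
  | zero => simp
  | succ k ih =>
    calc f (2 ^ (k + 1) * n) = f (2 * (2 ^ k * n)) := by rw [pow_succ', mul_assoc]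
      _ ≤ c * f (2 ^ k * n) := h _ (hn.trans (Nat.le_mul_of_pos_left n (by positivity)))
      _ ≤ c * (c ^ k * f n) := mul_le_mul_of_nonneg_left ih hc
      _ = c ^ (k + 1) * f n := by ring

/-- Potter-type bound, uniform in the scaling factor. -/
lemma RegularlyVarying.eventually_le_rpow_mul (hRV : RegularlyVarying α γ) (hmono : Monotone α)
    (hpos : ∀ᶠ n : ℕ in atTop, 0 < α n) {γ' : ℝ} (hγ' : γ < γ') (hγ'0 : 0 ≤ γ') :
    ∀ᶠ n : ℕ in atTop, ∀ s > 0, α (n / s) ≤ (2 ^ γ' * s ^ (-γ') + 1) * α n := by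
  obtain ⟨N, hN⟩ := eventually_atTop.mp ((hRV.eventually_mul_two_le hpos hγ').and hpos)
  have hdouble : ∀ n ≥ N, α ((2 * n : ℕ) : ℝ) ≤ 2 ^ γ' * α n := fun n hn => by
    simpa [mul_comm] using (hN n hn).1
  filter_upwards [eventually_ge_atTop N] with n hn s hs
  have hαn : 0 ≤ α n := (hN n hn).2.le
  rcases le_or_gt 1 s with hs1 | hs1
  · calc α (n / s) ≤ α n := hmono (div_le_self n.cast_nonneg hs1)
      _ ≤ _ := le_mul_of_one_le_left hαn (le_add_of_nonneg_left (by positivity))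
  obtain ⟨k, hk, hk1⟩ := exists_nat_pow_near (one_le_one_div hs hs1.le) one_lt_two
  have hk' : (2 : ℝ) ^ (k + 1) ≤ 2 / s := by
    rw [pow_succ', div_eq_mul_one_div]; gcongr
  calc α (n / s) ≤ α ((2 ^ (k + 1) * n : ℕ) : ℝ) := hmono ?_
    _ ≤ (2 ^ γ') ^ (k + 1) * α n :=
      le_pow_mul_of_forall_le_mul_two (f := fun n : ℕ => α n) (by positivity) hdouble _ hn
    _ = ((2 : ℝ) ^ (k + 1)) ^ γ' * α n := by
      rw [← Real.rpow_natCast, ← Real.rpow_natCast, ← rpow_mul two_pos.le,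
        ← rpow_mul two_pos.le, mul_comm γ']
    _ ≤ (2 / s) ^ γ' * α n := by gcongr
    _ ≤ _ := by
      rw [div_rpow two_pos.le hs.le, rpow_neg hs.le, div_eq_mul_inv]
      linarith
  rw [div_eq_mul_one_div, mul_comm]; push_cast; gcongr

lemma RegularlyVarying.tendsto_integral_exp_neg_mul_div (hRV : RegularlyVarying α γ)
    (hmono : Monotone α) (hα : ∀ u, 0 ≤ α u) (hpos : ∀ᶠ n : ℕ in atTop, 0 < α n) (hγ : γ < 1) :
    Tendsto (fun n : ℕ => (∫ s in Ioi 0, exp (-s) * α (n / s)) / α n) atTop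
      (𝓝 (Gamma (1 - γ))) := by
  obtain ⟨γ', hγγ', hγ'1, hγ'0⟩ : ∃ γ', γ < γ' ∧ γ' < 1 ∧ 0 ≤ γ' :=
    ⟨(1 + max γ 0) / 2, by linarith [le_max_left γ 0, max_lt hγ one_pos],
      by linarith [max_lt hγ one_pos], by positivity⟩
  have hbound : IntegrableOn (fun s => 2 ^ γ' * (exp (-s) * s ^ (-γ')) + exp (-s)) (Ioi 0) := by
    have h := GammaIntegral_convergent (sub_pos.mpr hγ'1)
    rw [sub_sub_cancel_left] at h
    exact (h.const_mul _).add (integrableOn_exp_neg_Ioi 0)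
  rw [Gamma_eq_integral (sub_pos.mpr hγ), sub_sub_cancel_left]
  simp_rw [← integral_div]
  refine tendsto_integral_filter_of_dominated_convergence _
    (Eventually.of_forall fun n => by have := hmono.measurable; fun_prop) ?_ hbound ?_
  · filter_upwards [hRV.eventually_le_rpow_mul hmono hpos hγγ' hγ'0, hpos] with n hn hαn
    refine (ae_restrict_iff' measurableSet_Ioi).mpr (Eventually.of_forall fun s (hs : 0 < s) => ?_)
    rw [norm_of_nonneg (by have := hα (n / s); positivity), div_le_iff₀ hαn]
    calc exp (-s) * α (n / s) ≤ exp (-s) * ((2 ^ γ' * s ^ (-γ') + 1) * α n) := by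
          gcongr; exact hn s hs
      _ = _ := by ring
  · refine (ae_restrict_iff' measurableSet_Ioi).mpr (Eventually.of_forall fun s (hs : 0 < s) => ?_)
    have h := (hRV s⁻¹ (inv_pos.mpr hs)).const_mul (exp (-s))
    rw [inv_rpow hs.le, ← rpow_neg hs.le] at h
    simpa only [mul_div_assoc, div_eq_mul_inv, mul_assoc] using h

end RegularVariation

section Occupancy

variable {p : ℕ → ℝ}

lemma finite_setOf_one_div_le (hp : ∀ j, 0 < p j) (hsum : Summable p) (u : ℝ) :
    {j : ℕ | 1 / p j ≤ u}.Finite := by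
  have hu : 0 < 1 / max u 1 := by positivity
  exact (eventually_cofinite.mp (hsum.tendsto_cofinite_zero.eventually (gt_mem_nhds hu))).subset
    fun j (hj : 1 / p j ≤ u) =>
      not_lt.mpr <| (one_div_le (hp j) (by positivity)).mp (hj.trans (le_max_left _ _))

lemma alpha0_mono (hp : ∀ j, 0 < p j) (hsum : Summable p) : Monotone (alpha0 p) :=
  fun _ v huv => Nat.cast_le.mpr <|
    Nat.card_mono (finite_setOf_one_div_le hp hsum v) fun _ hj => le_trans hj huv

lemma eventually_alpha0_pos (hp : ∀ j, 0 < p j) (hsum : Summable p) :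
    ∀ᶠ n : ℕ in atTop, 0 < alpha0 p n := by
  filter_upwards [eventually_ge_atTop ⌈1 / p 0⌉₊] with n hn
  have := (finite_setOf_one_div_le hp hsum n).to_subtype
  have h0 : 0 ∈ {j : ℕ | 1 / p j ≤ n} := (Nat.le_ceil _).trans (Nat.cast_le.mpr hn)
  have : Nonempty {j : ℕ | 1 / p j ≤ n} := ⟨⟨0, h0⟩⟩
  exact Nat.cast_pos.mpr Nat.card_pos

lemma summable_one_sub_exp_neg_mul (hp : ∀ j, 0 < p j) (hsum : Summable p) {t : ℝ} (ht : 0 ≤ t) :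
    Summable fun j => 1 - exp (-(t * p j)) :=
  (hsum.mul_left t).of_nonneg_of_le
    (fun j => sub_nonneg.mpr (exp_le_one_iff.mpr (neg_nonpos.mpr (mul_nonneg ht (hp j).le))))
    (fun j => by linarith [add_one_le_exp (-(t * p j))])

lemma ofReal_exp_neg_mul_alpha0 (hp : ∀ j, 0 < p j) (hsum : Summable p) {t s : ℝ} (hs : 0 < s) :
    ENNReal.ofReal (exp (-s) * alpha0 p (t / s)) =
      ∑' j, (Iic (t * p j)).indicator (fun x => ENNReal.ofReal (exp (-x))) s := by
  set S := {j : ℕ | s ≤ t * p j}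
  have hS : {j : ℕ | 1 / p j ≤ t / s} = S := by
    ext j; simp only [mem_ofPred_eq, S, div_le_div_iff₀ (hp j) hs, one_mul]
  have hfin : S.Finite := hS ▸ finite_setOf_one_div_le hp hsum _
  calc ENNReal.ofReal (exp (-s) * alpha0 p (t / s))
      = S.encard * ENNReal.ofReal (exp (-s)) := by
        rw [alpha0, hS, Nat.card_coe_set_eq, ← hfin.cast_ncard_eq,
          ENNReal.ofReal_mul (exp_pos _).le, ENNReal.ofReal_natCast, mul_comm]
        rfl
    _ = ∑' j, S.indicator (fun _ => ENNReal.ofReal (exp (-s))) j := by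
        rw [← ENNReal.tsum_set_const]; exact tsum_subtype S fun _ => ENNReal.ofReal (exp (-s))
    _ = _ := tsum_congr fun j => by by_cases h : s ≤ t * p j <;> simp [S, h]

lemma lintegral_exp_neg_Ioc {a : ℝ} (ha : 0 ≤ a) :
    ∫⁻ s in Ioc 0 a, ENNReal.ofReal (exp (-s)) = ENNReal.ofReal (1 - exp (-a)) := by
  rw [← ofReal_integral_eq_lintegral_ofReal
    ((integrableOn_exp_neg_Ioi 0).mono_set Ioc_subset_Ioi_self)
    (ae_of_all _ fun s => (exp_pos _).le), ← intervalIntegral.integral_of_le ha]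
  simp [intervalIntegral.integral_comp_neg]

lemma integral_exp_neg_mul_alpha0 (hp : ∀ j, 0 < p j) (hsum : Summable p) {t : ℝ} (ht : 0 < t) :
    ∫ s in Ioi 0, exp (-s) * alpha0 p (t / s) = ∑' j, (1 - exp (-(t * p j))) := by
  have hmeas : Measurable fun s => exp (-s) * alpha0 p (t / s) := by
    have := (alpha0_mono hp hsum).measurable; fun_prop
  have hnonneg : 0 ≤ fun s => exp (-s) * alpha0 p (t / s) :=
    fun s => mul_nonneg (exp_pos _).le (Nat.cast_nonneg _)
  have hterm (j : ℕ) :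
      ∫⁻ s in Ioi 0, (Iic (t * p j)).indicator (fun x => ENNReal.ofReal (exp (-x))) s =
        ENNReal.ofReal (1 - exp (-(t * p j))) := by
    rw [lintegral_indicator measurableSet_Iic, Measure.restrict_restrict measurableSet_Iic,
      Iic_inter_Ioi, lintegral_exp_neg_Ioc (mul_pos ht (hp j)).le]
  have hpos (j : ℕ) : 0 ≤ 1 - exp (-(t * p j)) := by
    simpa using (mul_pos ht (hp j)).le
  rw [integral_eq_lintegral_of_nonneg_ae (ae_of_all _ hnonneg) hmeas.aestronglyMeasurable,
    setLIntegral_congr_fun measurableSet_Ioi fun s hs => ofReal_exp_neg_mul_alpha0 hp hsum hs,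
    lintegral_tsum fun j => (Measurable.indicator (by fun_prop) measurableSet_Iic).aemeasurable,
    tsum_congr hterm,
    ← ENNReal.ofReal_tsum_of_nonneg hpos (summable_one_sub_exp_neg_mul hp hsum ht.le),
    ENNReal.toReal_ofReal (tsum_nonneg hpos)]

lemma tendsto_tsum_one_sub_exp_neg_div_alpha0 (hp : ∀ j, 0 < p j) (hsum : Summable p) {γ : ℝ}
    (hγ : γ < 1) (hRV : RegularlyVarying (alpha0 p) γ) :
    Tendsto (fun n : ℕ => (∑' j, (1 - exp (-(n * p j)))) / alpha0 p n) atTop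
      (𝓝 (Gamma (1 - γ))) := by
  refine (hRV.tendsto_integral_exp_neg_mul_div (alpha0_mono hp hsum) (fun _ => Nat.cast_nonneg _)
    (eventually_alpha0_pos hp hsum) hγ).congr' ?_
  filter_upwards [eventually_gt_atTop 0] with n hn
  rw [integral_exp_neg_mul_alpha0 hp hsum (Nat.cast_pos.mpr hn)]

lemma tsum_exp_neg_mul_one_sub_exp_neg (hp : ∀ j, 0 < p j) (hsum : Summable p) {t : ℝ}
    (ht : 0 ≤ t) :
    ∑' j, exp (-(t * p j)) * (1 - exp (-(t * p j))) =
      ∑' j, (1 - exp (-(2 * t * p j))) - ∑' j, (1 - exp (-(t * p j))) := by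
  rw [← (summable_one_sub_exp_neg_mul hp hsum (by positivity)).tsum_sub
    (summable_one_sub_exp_neg_mul hp hsum ht)]
  congr with j
  rw [mul_assoc, two_mul, neg_add, exp_add]
  ring

end Occupancy

/-- Lemma (Karlin): `α(n)⁻¹ ∑_j Var(1_{M_{n,j} ≥ 1}) = α(n)⁻¹ ∑_j e^{-n p_j}(1 - e^{-n p_j})
→ (2^γ - 1) Γ(1-γ)`, for independent `M_{n,j} ∼ Poisson(n p_j)`. -/
theorem poisson_occupancy_variance
    (p : ℕ → ℝ) (hp : ∀ j, 0 < p j) (hpsum : HasSum p 1)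
    (γ : ℝ) (hγ : γ ∈ Set.Ioo (0 : ℝ) 1)
    (hRV : RegularlyVarying (alpha0 p) γ) :
    Tendsto
      (fun n : ℕ =>
        (∑' j : ℕ, Real.exp (-((n : ℝ) * p j)) * (1 - Real.exp (-((n : ℝ) * p j)))) / alpha0 p n)
      atTop (𝓝 (((2 : ℝ) ^ γ - 1) * Real.Gamma (1 - γ))) := by
  have hsum := hpsum.summable
  have hlim := tendsto_tsum_one_sub_exp_neg_div_alpha0 hp hsum hγ.2 hRV
  have hdouble : Tendsto (fun n : ℕ => 2 * n) atTop atTop :=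
    tendsto_id.const_mul_atTop' two_pos
  have hcomb := ((hlim.comp hdouble).mul (hRV 2 two_pos)).sub hlim
  rw [show Gamma (1 - γ) * 2 ^ γ - Gamma (1 - γ) = (2 ^ γ - 1) * Gamma (1 - γ) by ring] at hcomb
  refine hcomb.congr' ?_
  filter_upwards [eventually_alpha0_pos hp hsum,
    hdouble.eventually (eventually_alpha0_pos hp hsum)] with n hn h2n
  simp only [Function.comp_apply, Nat.cast_mul, Nat.cast_ofNat] at h2n ⊢
  rw [tsum_exp_neg_mul_one_sub_exp_neg hp hsum n.cast_nonneg, mul_comm (n : ℝ) 2]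
  field_simp

end
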